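/- Let f be monotone k-submodular with f(∅) ≥ 0, and let o ∈ (k+1)^E with |P(o)| = r ≥ w. Let q⁰ = ∅ ⪯ q¹ ⪯ ⋯ ⪯ q^w be greedily constructed inside P(o) (each step adds the element/index pair from P(o) maximizing f), and let ō^w be the k-tuple with support P(o) agreeing with q^w on P(q^w) and with o elsewhere. Then f(o) - f(q^w) ≤ f(ō^w). -/

import Mathlib

open Finset

/-- Join `⊔` on `(k+1)^E`, where a `k`-tuple of pairwise disjoint subsets of `E`
is represented as a function `E → Option (Fin k)`. -/
def ksup {E : Type*} {k : ℕ} (x y : E → Option (Fin k)) : E → Option (Fin k) :=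
  fun e => match x e, y e with
  | none, b => b
  | some i, none => some i
  | some i, some j => if i = j then some i else none

/-- Meet `⊓` on `(k+1)^E`. -/
def kinf {E : Type*} {k : ℕ} (x y : E → Option (Fin k)) : E → Option (Fin k) :=
  fun e => match x e, y e with
  | some i, some j => if i = j then some i else none
  | _, _ => none

/-- The partial order `x ⪯ y` : `X_i ⊆ Y_i` for all `i`. -/
def kle {E : Type*} {k : ℕ} (x y : E → Option (Fin k)) : Prop :=
  ∀ e i, x e = some i → y e = some i

/-- `I_{[e,i]}`: the `k`-tuple with `{e}` in coordinate `i` and `∅` elsewhere. -/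
def ksingle {E : Type*} [DecidableEq E] {k : ℕ} (e : E) (i : Fin k) : E → Option (Fin k) :=
  fun e' => if e' = e then some i else none

/-- Marginal gain `Δ_{e,i} f(x) = f(x ⊔ I_{[e,i]}) - f(x)`. -/
def marg {E : Type*} [DecidableEq E] {k : ℕ} (f : (E → Option (Fin k)) → ℝ)
    (x : E → Option (Fin k)) (e : E) (i : Fin k) : ℝ :=
  f (ksup x (ksingle e i)) - f x

/-- `f` is `k`-submodular: `f(x⊔y) + f(x⊓y) ≤ f(x) + f(y)`. -/
def KSubmodular {E : Type*} {k : ℕ} (f : (E → Option (Fin k)) → ℝ) : Prop :=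
  ∀ x y, f (ksup x y) + f (kinf x y) ≤ f x + f y

/-- The support `P(x) = ⋃ᵢ Xᵢ` as a finset. -/
def suppK {E : Type*} [Fintype E] {k : ℕ} (x : E → Option (Fin k)) : Finset E :=
  Finset.univ.filter fun e => x e ≠ none

/-- Orthant submodularity. -/
def OrthantSubmodular {E : Type*} [DecidableEq E] {k : ℕ}
    (f : (E → Option (Fin k)) → ℝ) : Prop :=
  ∀ x y, kle x y → ∀ e, y e = none → ∀ i, marg f y e i ≤ marg f x e i

/-- Pairwise monotonicity. -/
def PairwiseMonotone {E : Type*} [DecidableEq E] {k : ℕ}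
    (f : (E → Option (Fin k)) → ℝ) : Prop :=
  ∀ x e, x e = none → ∀ i j : Fin k, i ≠ j → 0 ≤ marg f x e i + marg f x e j

/-- Monotonicity with respect to `⪯`. -/
def KMonotone {E : Type*} {k : ℕ} (f : (E → Option (Fin k)) → ℝ) : Prop :=
  ∀ x y, kle x y → f x ≤ f y


/-!
With `ō^j` written as "`ō^{j-1}` overwritten by `q^j`", each greedy step changes `ō` in one
coordinate `e` only: it gets the label `i` chosen by the greedy step. Removing `e` from `ō^{j-1}`
gives a tuple `s` with `q^{j-1} ⪯ s`, so orthant submodularity bounds what `ō^{j-1}` loses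
against `s` by the gain of adding `e` (with the old label) to `q^{j-1}`, which greedy choice
bounds by `f(q^j) - f(q^{j-1})`; and `f(s) ≤ f(ō^j)` by monotonicity. Telescoping gives
`f(o) - f(ō^w) ≤ f(q^w) - f(∅) ≤ f(q^w)`.
-/

open Function

section Lattice

variable {E : Type*} {k : ℕ}

theorem ksup_ksup_self_apply (x y : E → Option (Fin k)) (e : E) :
    ksup (ksup y x) x e = (x e).or (y e) := by
  unfold ksup
  rcases x e with _ | b
  · rcases y e with _ | a <;> rfl
  · rcases y e with _ | a
    · simp
    · by_cases hab : a = b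
      · subst hab; simp
      · simp [hab]

theorem kle_update_some_of_eq_none [DecidableEq E] {x : E → Option (Fin k)} {e : E}
    (hx : x e = none) (i : Fin k) : kle x (update x e (some i)) := by
  intro e' a ha
  rcases eq_or_ne e' e with rfl | he
  · simp [hx] at ha
  · rwa [update_of_ne he]

theorem kle_update_none_of_kle [DecidableEq E] {x y : E → Option (Fin k)} (hxy : kle x y)
    {e : E} (hx : x e = none) : kle x (update y e none) := by
  intro e' a ha
  rcases eq_or_ne e' e with rfl | he
  · simp [hx] at ha
  · rw [update_of_ne he]
    exact hxy e' a ha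

theorem kle_update_update [DecidableEq E] {x y : E → Option (Fin k)} (hxy : kle x y)
    (e : E) (b : Option (Fin k)) : kle (update x e b) (update y e b) := by
  intro e' a ha
  rcases eq_or_ne e' e with rfl | he
  · simpa using ha
  · rw [update_of_ne he] at ha ⊢
    exact hxy e' a ha

theorem ksup_ksingle_of_eq_none [DecidableEq E] {x : E → Option (Fin k)} {e : E}
    (hx : x e = none) (i : Fin k) : ksup x (ksingle e i) = update x e (some i) := by
  funext e'
  rcases eq_or_ne e' e with rfl | he
  · simp [ksup, ksingle, hx]
  · rcases hx' : x e' with _ | a <;> simp [ksup, ksingle, he, hx']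

theorem ksup_ksup_update_of_kle [DecidableEq E] {x y : E → Option (Fin k)} (hxy : kle x y)
    (e : E) (i : Fin k) :
    ksup (ksup y (update x e (some i))) (update x e (some i)) = update y e (some i) := by
  funext e'
  rw [ksup_ksup_self_apply]
  rcases eq_or_ne e' e with rfl | he
  · simp
  · rw [update_of_ne he, update_of_ne he]
    rcases hx : x e' with _ | a
    · rfl
    · exact (hxy e' a hx).symm

theorem eq_none_of_kle {x y : E → Option (Fin k)} (hxy : kle x y) {e : E}
    (hy : y e = none) : x e = none := by
  rcases hx : x e with _ | a
  · rfl
  · simp [hxy e a hx] at hy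

theorem ksup_update_some_of_kle [DecidableEq E] {x y : E → Option (Fin k)} (hxy : kle x y)
    {e : E} (hy : y e = none) (i : Fin k) :
    ksup y (update x e (some i)) = update y e (some i) := by
  funext e'
  rcases eq_or_ne e' e with rfl | he
  · simp [ksup, hy]
  · simp only [ksup, update_of_ne he]
    rcases hx : x e' with _ | a
    · rcases y e' with _ | b <;> simp
    · simp [hxy e' a hx]

theorem kinf_update_some_of_kle [DecidableEq E] {x y : E → Option (Fin k)} (hxy : kle x y)
    {e : E} (hy : y e = none) (i : Fin k) : kinf y (update x e (some i)) = x := by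
  funext e'
  rcases eq_or_ne e' e with rfl | he
  · simp [kinf, hy, eq_none_of_kle hxy hy]
  · simp only [kinf, update_of_ne he]
    rcases hx : x e' with _ | a
    · rcases y e' with _ | b <;> simp
    · simp [hxy e' a hx]

end Lattice

section Submodular

variable {E : Type*} [DecidableEq E] {k : ℕ} {f : (E → Option (Fin k)) → ℝ}

theorem KSubmodular.orthantSubmodular (hf : KSubmodular f) : OrthantSubmodular f := by
  intro x y hxy e hy i
  have hx : x e = none := eq_none_of_kle hxy hy
  have := hf y (update x e (some i))
  rw [ksup_update_some_of_kle hxy hy, kinf_update_some_of_kle hxy hy] at this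
  simp only [marg, ksup_ksingle_of_eq_none hy, ksup_ksingle_of_eq_none hx]
  linarith

/-- The greedy swap inequality, with `x = q^{j-1}`, `y = ō^{j-1}`, `update x e (some i) = q^j`
and `update y e (some i) = ō^j`. -/
theorem KSubmodular.sub_le_greedy_gain (hf : KSubmodular f) (hmono : KMonotone f)
    {x y : E → Option (Fin k)} (hxy : kle x y) {e : E} (hx : x e = none) {i : Fin k}
    (hbest : ∀ i', f (update x e (some i')) ≤ f (update x e (some i))) :
    f y - f (update y e (some i)) ≤ f (update x e (some i)) - f x := by
  set s := update y e none
  have hs : s e = none := update_self e none y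
  have hs_le : f s ≤ f (update y e (some i)) := by
    rw [show update y e (some i) = update s e (some i) from (update_idem _ _ _).symm]
    exact hmono _ _ (kle_update_some_of_eq_none hs i)
  have hloss : f y - f s ≤ f (update x e (some i)) - f x := by
    rcases hy : y e with _ | i'
    · have hys : s = y := update_eq_self_iff.mpr hy.symm
      rw [hys, sub_self, sub_nonneg]
      exact hmono _ _ (kle_update_some_of_eq_none hx i)
    · have hys : update s e (some i') = y := by
        rw [update_idem, update_eq_self_iff, hy]
      have horth := hf.orthantSubmodular x s (kle_update_none_of_kle hxy hx) e hs i'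
      simp only [marg, ksup_ksingle_of_eq_none hs, ksup_ksingle_of_eq_none hx, hys] at horth
      linarith [hbest i']
  linarith

end Submodular

theorem notMem_suppK {E : Type*} [Fintype E] {k : ℕ} {x : E → Option (Fin k)} {e : E} :
    e ∉ suppK x ↔ x e = none := by
  simp [suppK]

theorem stmt_15_general {E : Type*} [Fintype E] [DecidableEq E] {k w : ℕ}
    (f : (E → Option (Fin k)) → ℝ) (hf : KSubmodular f) (hmono : KMonotone f)
    (hnn : ∀ x, 0 ≤ f x)
    (o : E → Option (Fin k))
    (q ob : ℕ → (E → Option (Fin k)))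
    (hq0 : q 0 = fun _ => none)
    (hstep : ∀ j, 1 ≤ j → j ≤ w → ∃ e ∈ suppK o \ suppK (q (j - 1)), ∃ i : Fin k,
      q j = ksup (q (j - 1)) (ksingle e i))
    (hgreedy : ∀ j, 1 ≤ j → j ≤ w →
      ∀ e ∈ suppK o \ suppK (q (j - 1)), ∀ i : Fin k,
        f (ksup (q (j - 1)) (ksingle e i)) ≤ f (q j))
    (hob0 : ob 0 = o)
    (hob : ∀ j, 1 ≤ j → j ≤ w → ob j = ksup (ksup (ob (j - 1)) (q j)) (q j)) :
    f o - f (q w) ≤ f (ob w) := by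
  have key : ∀ j ≤ w, kle (q j) (ob j) ∧ f o - f (ob j) ≤ f (q j) - f (q 0) := by
    intro j hj
    induction j with
    | zero => exact ⟨fun e a h => by simp [hq0] at h, by simp [hob0]⟩
    | succ j ih =>
      obtain ⟨hle, hgap⟩ := ih (by omega)
      obtain ⟨e, he, i, hqj⟩ := hstep (j + 1) (by omega) hj
      have hbest := hgreedy (j + 1) (by omega) hj e he
      simp only [Nat.add_sub_cancel] at he hqj hbest
      have hqe := notMem_suppK.mp (mem_sdiff.mp he).2
      simp only [ksup_ksingle_of_eq_none hqe] at hqj hbest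
      have hobj : ob (j + 1) = update (ob j) e (some i) := by
        rw [hob (j + 1) (by omega) hj, Nat.add_sub_cancel, hqj, ksup_ksup_update_of_kle hle]
      rw [hqj] at hbest ⊢
      rw [hobj]
      refine ⟨kle_update_update hle e (some i), ?_⟩
      linarith [hf.sub_le_greedy_gain hmono hle hqe hbest]
  linarith [(key w le_rfl).2, hnn (q 0)]

theorem stmt_15 {E : Type*} [Fintype E] [DecidableEq E] {k w : ℕ} (hk : 0 < k)
    (f : (E → Option (Fin k)) → ℝ) (hf : KSubmodular f) (hmono : KMonotone f)
    (hnn : ∀ x, 0 ≤ f x)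
    (o : E → Option (Fin k)) (r : ℕ) (hr : (suppK o).card = r) (hwr : w ≤ r)
    (q ob : ℕ → (E → Option (Fin k)))
    (hq0 : q 0 = fun _ => none)
    (hstep : ∀ j, 1 ≤ j → j ≤ w → ∃ e ∈ suppK o \ suppK (q (j - 1)), ∃ i : Fin k,
      q j = ksup (q (j - 1)) (ksingle e i))
    (hgreedy : ∀ j, 1 ≤ j → j ≤ w →
      ∀ e ∈ suppK o \ suppK (q (j - 1)), ∀ i : Fin k,
        f (ksup (q (j - 1)) (ksingle e i)) ≤ f (q j))
    (hob0 : ob 0 = o)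
    (hob : ∀ j, 1 ≤ j → j ≤ w → ob j = ksup (ksup (ob (j - 1)) (q j)) (q j)) :
    f o - f (q w) ≤ f (ob w) :=
  stmt_15_general f hf hmono hnn o q ob hq0 hstep hgreedy hob0 hob
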